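/- (Existence of a coverage-matching amplitude in the no-nugget case.) Assume σ_ε² = 0, Hypothesis H2, a ∈ (1/2, 1), q > 0, and 0 < δ < q. Fix y ∈ ℝⁿ and a real symmetric positive definite n×n matrix R; for σ² > 0 let K̄(σ²) be the matrix K̄ associated with K(σ²) = σ²R, and let R̄ be the matrix K̄ associated with K = R. If Card{ i ∈ {1,…,n} : (R̄y)ᵢ ≤ 0 } < na, then there exists σ² ∈ (0,∞) such that ψ⁺_δ(σ²) = a, where ψ⁺_δ(σ²) = (1/n)Σᵢ₌₁ⁿ h⁺_δ(q − (K̄(σ²)y)ᵢ/√(K̄(σ²)ᵢᵢ)). -/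

import Mathlib

open Matrix

/-- The matrix `K̄ = K⁻¹ − K⁻¹F(FᵀK⁻¹F)⁻¹FᵀK⁻¹`. -/
noncomputable def Kbar {n p : ℕ} (F : Matrix (Fin n) (Fin p) ℝ)
    (K : Matrix (Fin n) (Fin n) ℝ) : Matrix (Fin n) (Fin n) ℝ :=
  K⁻¹ - K⁻¹ * F * (Fᵀ * K⁻¹ * F)⁻¹ * Fᵀ * K⁻¹

/-- `h⁺_δ(x) = 1` if `x > δ`, `x/δ` if `0 < x ≤ δ`, `0` if `x ≤ 0`. -/
noncomputable def hplus (δ x : ℝ) : ℝ :=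
  if δ < x then 1 else if 0 < x then x / δ else 0

/-- `ψ⁺_δ(K) = (1/n) Σᵢ h⁺_δ(q − (K̄y)ᵢ/√(K̄ᵢᵢ))`. -/
noncomputable def psiPlus {n p : ℕ} (F : Matrix (Fin n) (Fin p) ℝ)
    (y : Fin n → ℝ) (δ q : ℝ) (K : Matrix (Fin n) (Fin n) ℝ) : ℝ :=
  (1 / n) * ∑ i, hplus δ (q - (Kbar F K *ᵥ y) i / Real.sqrt (Kbar F K i i))

/-!
Scaling `K` by `s` scales `K̄` by `s⁻¹`, so with `t = s^{-1/2}` and `cᵢ = (R̄y)ᵢ / √R̄ᵢᵢ` we get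
`ψ⁺_δ(sR) = (1/n) Σᵢ h⁺_δ(q - t cᵢ)`, a continuous function of `t`. At `t = 0` it equals
`1 > a` because `δ < q`; for large `t` it equals `#{i : cᵢ ≤ 0} / n < a`, because H2 makes
`R̄ᵢᵢ > 0`, so `cᵢ` has the sign of `(R̄y)ᵢ`. The intermediate value theorem on `(0, ∞)` gives
the amplitude.
-/

namespace Matrix

lemma inv_smul_of_ne_zero {m K : Type*} [Fintype m] [DecidableEq m] [Field K]
    (A : Matrix m m K) {c : K} (hc : c ≠ 0) : (c • A)⁻¹ = c⁻¹ • A⁻¹ := by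
  by_cases hA : IsUnit A.det
  · exact inv_smul' A (Units.mk0 c hc) hA
  · have hcA : ¬IsUnit (c • A).det := by simp_all [isUnit_iff_ne_zero]
    rw [nonsing_inv_apply_not_isUnit _ hA, nonsing_inv_apply_not_isUnit _ hcA, smul_zero]

lemma mulVec_injective_of_rank_eq_card {m ι K : Type*} [Fintype ι] [Field K] {F : Matrix m ι K}
    (hF : F.rank = Fintype.card ι) : Function.Injective F.mulVec := by
  have h := LinearMap.finrank_range_add_finrank_ker F.mulVecLin
  rw [← rank, hF, Module.finrank_fintype_fun_eq_card, add_eq_left,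
    Submodule.finrank_eq_zero, LinearMap.ker_eq_bot] at h
  exact h

end Matrix

section Kbar

variable {n p : ℕ} (F : Matrix (Fin n) (Fin p) ℝ)

lemma Kbar_smul (K : Matrix (Fin n) (Fin n) ℝ) {c : ℝ} (hc : c ≠ 0) :
    Kbar F (c • K) = c⁻¹ • Kbar F K := by
  simp only [Kbar, K.inv_smul_of_ne_zero hc, Matrix.mul_smul, Matrix.smul_mul,
    (Fᵀ * K⁻¹ * F).inv_smul_of_ne_zero (inv_ne_zero hc), smul_smul, smul_sub, inv_inv]
  field_simp

lemma dotProduct_Kbar_mulVec_pos (hF : Function.Injective F.mulVec)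
    {K : Matrix (Fin n) (Fin n) ℝ} (hK : K.PosDef) {v : Fin n → ℝ}
    (hv : v ∉ LinearMap.range F.mulVecLin) : 0 < v ⬝ᵥ (Kbar F K *ᵥ v) := by
  -- `vᵀK̄v = wᵀK⁻¹w` for `w = v - F(FᵀK⁻¹F)⁻¹FᵀK⁻¹v`, and `w ≠ 0` since `v ∉ Im F`.
  set S := K⁻¹
  have hS : S.PosDef := hK.inv
  have hA : (Fᵀ * S * F).PosDef := by
    simpa only [conjTranspose_eq_transpose_of_trivial] using hS.conjTranspose_mul_mul_same hF
  set G := (Fᵀ * S * F)⁻¹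
  set u := (G * Fᵀ * S) *ᵥ v
  set w := v - F *ᵥ u
  have hKbar : Kbar F K *ᵥ v = S *ᵥ w := by
    simp only [w, u, G, S, Kbar, sub_mulVec, mulVec_sub, mulVec_mulVec, Matrix.mul_assoc]
  have hFw : Fᵀ *ᵥ (S *ᵥ w) = 0 := by
    have hGA : (Fᵀ * S * F) * G = 1 := mul_nonsing_inv _ hA.det_pos.ne'.isUnit
    simp only [w, u, mulVec_sub, mulVec_mulVec, ← Matrix.mul_assoc]
    rw [hGA, Matrix.one_mul, sub_self]
  have hw : w ≠ 0 := fun h => hv ⟨u, (sub_eq_zero.mp h).symm⟩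
  calc 0 < star w ⬝ᵥ (S *ᵥ w) := hS.dotProduct_mulVec_pos hw
    _ = v ⬝ᵥ (S *ᵥ w) - (F *ᵥ u) ⬝ᵥ (S *ᵥ w) := by rw [star_trivial, sub_dotProduct]
    _ = v ⬝ᵥ (Kbar F K *ᵥ v) := by
      rw [hKbar, dotProduct_comm (F *ᵥ u), dotProduct_mulVec (S *ᵥ w) F u,
        ← mulVec_transpose, hFw, zero_dotProduct, sub_zero]

lemma Kbar_apply_self_pos (hF : Function.Injective F.mulVec) {K : Matrix (Fin n) (Fin n) ℝ}
    (hK : K.PosDef) {i : Fin n} (hi : Pi.single i 1 ∉ LinearMap.range F.mulVecLin) :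
    0 < Kbar F K i i := by
  simpa [mulVec_single, single_dotProduct] using dotProduct_Kbar_mulVec_pos F hF hK hi

end Kbar

open Filter

section hplus

variable {δ : ℝ}

lemma hplus_eq_max_min (hδ : 0 < δ) (x : ℝ) : hplus δ x = max 0 (min 1 (x / δ)) := by
  unfold hplus
  split_ifs with h₁ h₂
  · rw [min_eq_left ((one_le_div hδ).2 h₁.le), max_eq_right zero_le_one]
  · rw [min_eq_right ((div_le_one hδ).2 (not_lt.1 h₁)), max_eq_right (by positivity)]
  · rw [max_eq_left (min_le_of_right_le (div_nonpos_of_nonpos_of_nonneg (not_lt.1 h₂) hδ.le))]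

lemma continuous_hplus (hδ : 0 < δ) : Continuous (hplus δ) := by
  rw [funext (hplus_eq_max_min hδ)]
  fun_prop

lemma hplus_of_lt {x : ℝ} (h : δ < x) : hplus δ x = 1 := if_pos h

lemma hplus_of_nonpos (hδ : 0 ≤ δ) {x : ℝ} (h : x ≤ 0) : hplus δ x = 0 := by
  rw [hplus, if_neg (by linarith), if_neg (by linarith)]

lemma eventually_hplus_sub_mul_eq {q : ℝ} (hδ : 0 ≤ δ) (hδq : δ < q) (c : ℝ) :
    ∀ᶠ t in atTop, hplus δ (q - t * c) = if c ≤ 0 then 1 else 0 := by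
  split_ifs with hc
  · filter_upwards [eventually_ge_atTop 0] with t ht
    exact hplus_of_lt (by nlinarith)
  · filter_upwards [eventually_ge_atTop (q / c)] with t ht
    exact hplus_of_nonpos hδ (by linarith [(div_le_iff₀ (not_le.1 hc)).1 ht])

end hplus

lemma exists_pos_mean_hplus_sub_mul_eq {ι : Type*} [Fintype ι] {δ q a : ℝ} (c : ι → ℝ)
    (hδ : 0 < δ) (hδq : δ < q) (ha : a < 1)
    (hcard : ((Finset.univ.filter fun i => c i ≤ 0).card : ℝ) < Fintype.card ι * a) :
    ∃ t, 0 < t ∧ (1 / Fintype.card ι : ℝ) * ∑ i, hplus δ (q - t * c i) = a := by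
  set g : ℝ → ℝ := fun t => (1 / Fintype.card ι : ℝ) * ∑ i, hplus δ (q - t * c i)
  have hι : (0 : ℝ) < Fintype.card ι := (Nat.cast_nonneg _).lt_of_ne
    (left_ne_zero_of_mul ((Nat.cast_nonneg _).trans_lt hcard).ne').symm
  have hg : Continuous g :=
    continuous_const.mul <|
      continuous_finsetSum _ fun i _ => (continuous_hplus hδ).comp (by fun_prop)
  have hg0 : g 0 = 1 := by simp [g, hplus_of_lt hδq, hι.ne']
  obtain ⟨t₀, hga₀, ht₀⟩ : ∃ t₀, a < g t₀ ∧ 0 < t₀ :=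
    (((hg.tendsto 0).eventually (lt_mem_nhds (hg0 ▸ ha))).filter_mono nhdsWithin_le_nhds
      |>.and (self_mem_nhdsWithin (s := Set.Ioi 0))).exists
  have hlimit : ∀ᶠ t in atTop,
      g t = (1 / Fintype.card ι : ℝ) * (Finset.univ.filter fun i => c i ≤ 0).card := by
    filter_upwards [eventually_all.2 fun i => eventually_hplus_sub_mul_eq hδ.le hδq (c i)]
      with t ht
    simp only [g, ht, Finset.sum_boole]
  obtain ⟨t₁, hgt₁, ht₁⟩ := (hlimit.and (eventually_gt_atTop 0)).exists
  have hga₁ : g t₁ < a := by rwa [hgt₁, one_div, inv_mul_lt_iff₀ hι]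
  exact isPreconnected_Ioi.intermediate_value ht₁ ht₀ hg.continuousOn ⟨hga₁.le, hga₀.le⟩

lemma psiPlus_inv_sq_smul {n p : ℕ} (F : Matrix (Fin n) (Fin p) ℝ) (y : Fin n → ℝ)
    (δ q : ℝ) (K : Matrix (Fin n) (Fin n) ℝ) {t : ℝ} (ht : 0 < t) :
    psiPlus F y δ q ((t ^ 2)⁻¹ • K) =
      (1 / n) * ∑ i, hplus δ (q - t * ((Kbar F K *ᵥ y) i / √(Kbar F K i i))) := by
  simp only [psiPlus, Kbar_smul F K (inv_ne_zero (pow_ne_zero 2 ht.ne')), inv_inv, smul_mulVec,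
    Pi.smul_apply, Matrix.smul_apply, smul_eq_mul, Real.sqrt_mul (sq_nonneg t), Real.sqrt_sq ht.le]
  congr 2 with i
  rw [mul_div_mul_comm, sq, mul_div_cancel_right₀ _ ht.ne']

theorem stmt18_general (n p : ℕ)
    (F : Matrix (Fin n) (Fin p) ℝ) (hF : F.rank = p)
    (hH2 : ∀ i : Fin n, Pi.single i (1 : ℝ) ∉ LinearMap.range (Matrix.mulVecLin F))
    (y : Fin n → ℝ) (R : Matrix (Fin n) (Fin n) ℝ) (hR : R.PosDef)
    (a : ℝ) (ha : a ∈ Set.Ioo (1 / 2 : ℝ) 1)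
    (q : ℝ) (δ : ℝ) (hδ : 0 < δ) (hδq : δ < q)
    (hcard : ((Finset.univ.filter fun i : Fin n =>
        (Kbar F R *ᵥ y) i ≤ 0).card : ℝ) < n * a) :
    ∃ s : ℝ, 0 < s ∧ psiPlus F y δ q (s • R) = a := by
  have hFinj : Function.Injective F.mulVec :=
    Matrix.mulVec_injective_of_rank_eq_card (by rwa [Fintype.card_fin])
  have hsign : ∀ i, (Kbar F R *ᵥ y) i / √(Kbar F R i i) ≤ 0 ↔ (Kbar F R *ᵥ y) i ≤ 0 := fun i => by
    rw [div_le_iff₀ (Real.sqrt_pos.2 (Kbar_apply_self_pos F hFinj hR (hH2 i))), zero_mul]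
  obtain ⟨t, ht, hψ⟩ := exists_pos_mean_hplus_sub_mul_eq
    (fun i => (Kbar F R *ᵥ y) i / √(Kbar F R i i)) hδ hδq ha.2
    (by simpa only [hsign, Fintype.card_fin] using hcard)
  refine ⟨(t ^ 2)⁻¹, by positivity, ?_⟩
  rw [psiPlus_inv_sq_smul F y δ q R ht]
  rwa [Fintype.card_fin] at hψ

/-- Existence of a coverage-matching amplitude in the no-nugget case
(`K(σ²) = σ²R`): if `#{i : (R̄y)ᵢ ≤ 0} < na` with `R̄ = K̄` for `K = R`,
then `ψ⁺_δ(σ²) = a` for some `σ² > 0`. -/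
theorem stmt18 (n p : ℕ) (hp : 0 < p) (hpn : p < n)
    (F : Matrix (Fin n) (Fin p) ℝ) (hF : F.rank = p)
    (hH2 : ∀ i : Fin n, Pi.single i (1 : ℝ) ∉ LinearMap.range (Matrix.mulVecLin F))
    (y : Fin n → ℝ) (R : Matrix (Fin n) (Fin n) ℝ) (hR : R.PosDef)
    (a : ℝ) (ha : a ∈ Set.Ioo (1 / 2 : ℝ) 1)
    (q : ℝ) (hq : 0 < q) (δ : ℝ) (hδ : 0 < δ) (hδq : δ < q)
    (hcard : ((Finset.univ.filter fun i : Fin n =>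
        (Kbar F R *ᵥ y) i ≤ 0).card : ℝ) < n * a) :
    ∃ s : ℝ, 0 < s ∧ psiPlus F y δ q (s • R) = a :=
  stmt18_general n p F hF hH2 y R hR a ha q δ hδ hδq hcard
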